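/- arXiv:2308.08735 — 5 statements merged into one kernel-verified Lean document; each statement's English description precedes it below -/
import Mathlib

section
/- Let f : ℝⁿ → ℝ ∪ {∞} be proper, lower semicontinuous, and prox-bounded with threshold λ_f, and let λ ∈ (0, λ_f). If x̄ ∈ dom f and 0 belongs to the limiting subdifferential of the Moreau envelope e_λ f at x̄, then x̄ ∈ P_λ f(x̄) (x̄ is a fixed point of the proximal mapping) and e_λ f(x̄) = f(x̄). -/
open Filter Topology Set
open scoped ENNReal NNReal RealInnerProductSpace

noncomputable section

variable {E : Type*} [NormedAddCommGroup E] [InnerProductSpace ℝ E]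

/-- Fréchet (regular) subdifferential of an `EReal`-valued function. -/
def fsubd (f : E → EReal) (x : E) : Set E :=
  {v | f x ≠ ⊤ ∧ f x ≠ ⊥ ∧ ∀ ε : ℝ, 0 < ε → ∀ᶠ y in 𝓝 x,
      (((f x).toReal + inner ℝ v (y - x) - ε * ‖y - x‖ : ℝ) : EReal) ≤ f y}

/-- Limiting (Mordukhovich) subdifferential. -/
def lsubd (f : E → EReal) (x : E) : Set E :=
  {v | ∃ xs vs : ℕ → E, Tendsto xs atTop (𝓝 x) ∧
      Tendsto (fun k => f (xs k)) atTop (𝓝 (f x)) ∧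
      Tendsto vs atTop (𝓝 v) ∧ ∀ k, vs k ∈ fsubd f (xs k)}

/-- Sublevel set `{z | f z ≤ a}`. -/
def slev (f : E → EReal) (a : EReal) : Set E := {z | f z ≤ a}

/-- `d(0, ∂ f x)`, with the convention that the distance to the empty set is `∞`. -/
def subdist (f : E → EReal) (x : E) : ℝ≥0∞ := EMetric.infEdist 0 (lsubd f x)

/-- Conversion of an extended real to `ℝ≥0∞` (truncating negative values). -/
def toENN (a : EReal) : ℝ≥0∞ := if a = ⊤ then ⊤ else ENNReal.ofReal a.toReal

/-- Moreau envelope `e_λ f`. -/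
def moreauEnv (f : E → EReal) (lam : ℝ) (x : E) : EReal :=
  ⨅ y, f y + ((‖y - x‖ ^ 2 / (2 * lam) : ℝ) : EReal)

/-- Proximal mapping `P_λ f` (set of minimizers). -/
def proxPts (f : E → EReal) (lam : ℝ) (x : E) : Set E :=
  {y | ∀ z, f y + ((‖y - x‖ ^ 2 / (2 * lam) : ℝ) : EReal)
        ≤ f z + ((‖z - x‖ ^ 2 / (2 * lam) : ℝ) : EReal)}

/-- `f` is prox-bounded. -/
def ProxBdd (f : E → EReal) : Prop := ∃ lam > (0 : ℝ), ∃ x, moreauEnv f lam x ≠ ⊥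

/-- Threshold `λ_f` of prox-boundedness. -/
def proxThreshold (f : E → EReal) : ℝ :=
  sSup {lam | 0 < lam ∧ ∃ x, moreauEnv f lam x ≠ ⊥}

/-- `f` is proper (never `-∞`, somewhere finite). -/
def IsProperFn (f : E → EReal) : Prop := (∃ x, f x ≠ ⊤) ∧ ∀ x, f x ≠ ⊥

/-- Kurdyka–Łojasiewicz property at `xb` with exponent `γ` and constant `μ`. -/
def KLAt (f : E → EReal) (xb : E) (γ μ : ℝ) : Prop :=
  ∃ η > (0:ℝ), ∃ ν > (0:ℝ), ∀ x ∈ Metric.ball xb η,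
    f xb < f x → f x < f xb + (ν : EReal) →
    toENN (f x - f xb) ^ γ ≤ ENNReal.ofReal μ * subdist f x

/-- Level-set subdifferential error bound at `xb` with exponent `γ` and constant `μ`. -/
def LSEBAt (f : E → EReal) (xb : E) (γ μ : ℝ) : Prop :=
  ∃ η > (0:ℝ), ∃ ν > (0:ℝ), ∀ x ∈ Metric.ball xb η,
    f xb < f x → f x < f xb + (ν : EReal) →
    EMetric.infEdist x (slev f (f xb)) ^ γ ≤ ENNReal.ofReal μ * subdist f x

/-- Local Hölder error bound at `xb` with exponent `γ` and constant `μ`. -/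
def LHEBAt (f : E → EReal) (xb : E) (γ μ : ℝ) : Prop :=
  ∃ η > (0:ℝ), ∀ x ∈ Metric.ball xb η, f xb < f x →
    EMetric.infEdist x (slev f (f xb)) ^ γ ≤ ENNReal.ofReal μ * toENN (f x - f xb)

/-- Uniformized KL property on `Ω`. -/
def uKL (f : E → EReal) (Ω : Set E) (γ μ : ℝ) : Prop :=
  ∃ ε > (0:ℝ), ∃ ν > (0:ℝ), ∀ xb ∈ Ω, ∀ x, Metric.infDist x Ω < ε →
    f xb < f x → f x < f xb + (ν : EReal) →
    toENN (f x - f xb) ^ γ ≤ ENNReal.ofReal μ * subdist f x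

/-- Uniformized level-set subdifferential error bound on `Ω`. -/
def uLSEB (f : E → EReal) (Ω : Set E) (γ μ : ℝ) : Prop :=
  ∃ ε > (0:ℝ), ∃ ν > (0:ℝ), ∀ xb ∈ Ω, ∀ x, Metric.infDist x Ω < ε →
    f xb < f x → f x < f xb + (ν : EReal) →
    EMetric.infEdist x (slev f (f xb)) ^ γ ≤ ENNReal.ofReal μ * subdist f x

/-- Uniformized Hölder error bound on `Ω`. -/
def uHEB (f : E → EReal) (Ω : Set E) (γ μ : ℝ) : Prop :=
  ∃ ε > (0:ℝ), ∀ xb ∈ Ω, ∀ x, Metric.infDist x Ω < ε → f xb < f x →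
    EMetric.infEdist x (slev f (f xb)) ^ γ ≤ ENNReal.ofReal μ * toENN (f x - f xb)

/-- Prox-regularity of `f` at `xb` for `vb` with constant `ρ`. -/
def ProxRegularAt (f : E → EReal) (xb vb : E) (ρ : ℝ) : Prop :=
  vb ∈ lsubd f xb ∧ ∃ ε > (0:ℝ), ∀ x v, v ∈ lsubd f x → v ∈ Metric.ball vb ε →
    x ∈ Metric.ball xb ε → f x < f xb + (ε : EReal) → ∀ y ∈ Metric.ball xb ε,
      f x + (((inner ℝ v (y - x) : ℝ) - ρ / 2 * ‖y - x‖ ^ 2 : ℝ) : EReal) ≤ f y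

/-!
Suppose `e_λ f x̄ < c < f x̄`. Take `x` near `x̄` carrying a small Fréchet subgradient `v` of
`e_λ f`, and a near-minimizer `z` in the infimum defining `e_λ f x`. Along the segment
`y = x + t (z - x)` the envelope is bounded above through `z`, at the shorter distance
`(1 - t) ‖z - x‖`, and below by the subgradient inequality; comparing the two gives
`‖z - x‖² ≲ 2λ ‖v‖ ‖z - x‖`, so `z` lies close to `x̄` and lower semicontinuity forces
`f z > c`, whereas `f z ≤ e_λ f x + (small) < c`. Since `λ < λ_f`, near-minimizers stay in a
bounded set uniformly for `x` near `x̄`, which lets the step `t` be chosen before `z`.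
-/

theorem EReal.sub_le_sub_of_coe_le_add_of_add_le_coe {u : EReal} {p q s w : ℝ}
    (hp : (p : EReal) ≤ u + q) (hw : u + s ≤ w) : p - q ≤ w - s := by
  induction u with
  | bot => simp at hp
  | top => simp at hw
  | coe u =>
    norm_cast at hp hw
    linarith

theorem exists_le_of_mul_sq_sub_mul_sq_le {α β : ℝ} (hα : 0 ≤ α) (hαβ : α < β) (D K : ℝ) :
    ∃ M, ∀ s, 0 ≤ s → β * s ^ 2 - α * (s + D) ^ 2 ≤ K → s ≤ M := by
  refine ⟨1 + (|K| + α * D ^ 2 + 2 * α * |D|) / (β - α), fun s hs hK => ?_⟩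
  by_contra! hM
  have hγ : 0 < β - α := sub_pos.mpr hαβ
  have hs1 : 1 < s := lt_of_le_of_lt (le_add_of_nonneg_right (by positivity)) hM
  have hlin : |K| + α * D ^ 2 + 2 * α * |D| < (β - α) * s := by
    rw [add_comm, ← lt_sub_iff_add_lt, div_lt_iff₀ hγ] at hM
    nlinarith
  have hD : α * D * s ≤ α * |D| * s :=
    mul_le_mul_of_nonneg_right (mul_le_mul_of_nonneg_left (le_abs_self D) hα) hs
  nlinarith [le_abs_self K, mul_lt_mul_of_pos_right hlin (by linarith : (0:ℝ) < s),
    mul_le_mul_of_nonneg_left hs1.le (add_nonneg (abs_nonneg K) (mul_nonneg hα (sq_nonneg D)))]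

section NormedGroup

variable {F : Type*} [NormedAddCommGroup F]

theorem moreauEnv_le (f : F → EReal) (lam : ℝ) (x z : F) :
    moreauEnv f lam x ≤ f z + ((‖z - x‖ ^ 2 / (2 * lam) : ℝ) : EReal) :=
  iInf_le _ z

theorem moreauEnv_le_self (f : F → EReal) (lam : ℝ) (x : F) : moreauEnv f lam x ≤ f x := by
  simpa using moreauEnv_le f lam x x

theorem exists_coe_le_of_lt_proxThreshold {f : F → EReal} (hpb : ProxBdd f) {lam : ℝ}
    (hlam : lam < proxThreshold f) :
    ∃ lam' > lam, ∃ x₀ : F, ∃ b : ℝ,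
      ∀ z, (b : EReal) ≤ f z + ((‖z - x₀‖ ^ 2 / (2 * lam') : ℝ) : EReal) := by
  obtain ⟨lam', ⟨-, x₀, hx₀⟩, hlam'⟩ := exists_lt_of_lt_csSup hpb hlam
  obtain ⟨b, -, hb⟩ := EReal.exists_between_coe_real (bot_lt_iff_ne_bot.mpr hx₀)
  exact ⟨lam', hlam', x₀, b, fun z => hb.le.trans (moreauEnv_le f lam' x₀ z)⟩

theorem exists_norm_sub_le_of_lt_proxThreshold {f : F → EReal} (hpb : ProxBdd f) {lam : ℝ}
    (hlam : lam ∈ Ioo 0 (proxThreshold f)) (c : F) (R C : ℝ) :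
    ∃ M, ∀ x ∈ Metric.closedBall c R, ∀ z,
      f z + ((‖z - x‖ ^ 2 / (2 * lam) : ℝ) : EReal) ≤ C → ‖z - x‖ ≤ M := by
  obtain ⟨lam', hlam', x₀, b, hb⟩ := exists_coe_le_of_lt_proxThreshold hpb hlam.2
  have hlam0 := hlam.1
  have hlam'0 : 0 < lam' := hlam0.trans hlam'
  obtain ⟨M, hM⟩ := exists_le_of_mul_sq_sub_mul_sq_le (α := (2 * lam')⁻¹) (β := (2 * lam)⁻¹)
    (by positivity) (by gcongr) (R + ‖c - x₀‖) (C - b)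
  refine ⟨M, fun x hx z hz => hM _ (norm_nonneg _) ?_⟩
  have hzx₀ : ‖z - x₀‖ ≤ ‖z - x‖ + (R + ‖c - x₀‖) := by
    have := dist_triangle4 z x c x₀
    rw [Metric.mem_closedBall] at hx
    simp only [dist_eq_norm] at this hx
    linarith
  have hsq : (2 * lam')⁻¹ * ‖z - x₀‖ ^ 2 ≤ (2 * lam')⁻¹ * (‖z - x‖ + (R + ‖c - x₀‖)) ^ 2 := by
    gcongr
  have := EReal.sub_le_sub_of_coe_le_add_of_add_le_coe (hb z) hz
  rw [div_eq_inv_mul, div_eq_inv_mul] at this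
  linarith

end NormedGroup

theorem mul_sq_norm_sub_le_of_near_minimizer {f : E → EReal} {lam a δ ε t : ℝ} {x v z : E}
    (hlam : 0 < lam) (ht0 : 0 < t) (ht1 : t ≤ 1)
    (hv : ((a + ⟪v, t • (z - x)⟫ - ε * ‖t • (z - x)‖ : ℝ) : EReal) ≤
      moreauEnv f lam (x + t • (z - x)))
    (hz : f z + ((‖z - x‖ ^ 2 / (2 * lam) : ℝ) : EReal) ≤ ((a + δ : ℝ) : EReal)) :
    t * ‖z - x‖ ^ 2 ≤ 2 * lam * δ + 2 * lam * t * (‖v‖ + ε) * ‖z - x‖ := by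
  have hzy : z - (x + t • (z - x)) = (1 - t) • (z - x) := by
    rw [sub_smul, one_smul]; abel
  have hy := hv.trans (moreauEnv_le f lam _ z)
  rw [hzy] at hy
  have key := EReal.sub_le_sub_of_coe_le_add_of_add_le_coe hy hz
  rw [inner_smul_right, norm_smul, norm_smul, Real.norm_of_nonneg ht0.le,
    Real.norm_of_nonneg (sub_nonneg.mpr ht1)] at key
  have hinner : -(‖v‖ * ‖z - x‖) ≤ ⟪v, z - x⟫ :=
    neg_le_of_abs_le (abs_real_inner_le_norm v (z - x))
  set r := ‖z - x‖
  set Q := r ^ 2 / (2 * lam)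
  have hQ : 0 ≤ Q := by positivity
  have hr : r ^ 2 = 2 * lam * Q := by simp only [Q]; field_simp
  have hQ' : ((1 - t) * r) ^ 2 / (2 * lam) = (1 - t) ^ 2 * Q := by ring
  rw [hQ'] at key
  have hdecay : t * Q ≤ δ + t * (‖v‖ + ε) * r := by
    nlinarith [mul_le_mul_of_nonneg_left hinner ht0.le, mul_nonneg (mul_nonneg ht0.le
      (sub_nonneg.mpr ht1)) hQ]
  rw [hr]
  nlinarith [mul_le_mul_of_nonneg_left hdecay (by positivity : (0:ℝ) ≤ 2 * lam)]

theorem exists_near_minimizer_sq_norm_sub_le {f : E → EReal} {lam ε η M C : ℝ} {x v : E}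
    (hlam : 0 < lam) (hv : v ∈ fsubd (moreauEnv f lam) x) (hε : 0 < ε) (hη : 0 < η)
    (hC : moreauEnv f lam x < C)
    (hM : ∀ z, f z + ((‖z - x‖ ^ 2 / (2 * lam) : ℝ) : EReal) < C → ‖z - x‖ ≤ M) :
    ∃ z, f z + ((‖z - x‖ ^ 2 / (2 * lam) : ℝ) : EReal) < C ∧
      ‖z - x‖ ^ 2 ≤ η + 2 * lam * (‖v‖ + ε) * M := by
  obtain ⟨hne_top, hne_bot, hfrechet⟩ := hv
  set a := (moreauEnv f lam x).toReal
  have ha : moreauEnv f lam x = a := (EReal.coe_toReal hne_top hne_bot).symm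
  have haC : a < C := by rw [ha] at hC; exact_mod_cast hC
  have hM0 : 0 ≤ M := by
    obtain ⟨z, hz⟩ := iInf_lt_iff.mp hC
    exact (norm_nonneg _).trans (hM z hz)
  obtain ⟨ρ, hρ, hball⟩ := Metric.eventually_nhds_iff.mp (hfrechet ε hε)
  set t := min 1 (ρ / (M + 1))
  have ht0 : 0 < t := lt_min one_pos (by positivity)
  have ht1 : t ≤ 1 := min_le_left _ _
  have htM : t * M < ρ := by
    have := (le_div_iff₀ (by positivity)).mp (min_le_right 1 (ρ / (M + 1)))
    nlinarith
  set δ := min (C - a) (t * η / (2 * lam))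
  have hδ : 0 < δ := lt_min (sub_pos.mpr haC) (by positivity)
  obtain ⟨z, hz⟩ : ∃ z, f z + ((‖z - x‖ ^ 2 / (2 * lam) : ℝ) : EReal) < ((a + δ : ℝ) : EReal) :=
    iInf_lt_iff.mp (show moreauEnv f lam x < ((a + δ : ℝ) : EReal) by
      rw [ha]; exact_mod_cast lt_add_of_pos_right a hδ)
  have hzC : f z + ((‖z - x‖ ^ 2 / (2 * lam) : ℝ) : EReal) < C :=
    hz.trans_le (by exact_mod_cast (by linarith [min_le_left (C - a) (t * η / (2 * lam))]))
  have hzM := hM z hzC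
  have hy : dist (x + t • (z - x)) x < ρ := by
    rw [dist_eq_norm, add_sub_cancel_left, norm_smul, Real.norm_of_nonneg ht0.le]
    exact (mul_le_mul_of_nonneg_left hzM ht0.le).trans_lt htM
  have hfy := hball hy
  rw [add_sub_cancel_left] at hfy
  have key := mul_sq_norm_sub_le_of_near_minimizer hlam ht0 ht1 hfy hz.le
  have hδη : 2 * lam * δ ≤ t * η := by
    have := min_le_right (C - a) (t * η / (2 * lam))
    rwa [le_div_iff₀ (by positivity), mul_comm] at this
  have hrM : 2 * lam * t * (‖v‖ + ε) * ‖z - x‖ ≤ t * (2 * lam * (‖v‖ + ε) * M) := by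
    have : 0 ≤ 2 * lam * t * (‖v‖ + ε) := by positivity
    nlinarith [mul_le_mul_of_nonneg_left hzM this]
  refine ⟨z, hzC, le_of_mul_le_mul_left ?_ ht0⟩
  linarith

theorem le_moreauEnv_of_zero_mem_lsubd {f : E → EReal} (hlsc : LowerSemicontinuous f)
    (hpb : ProxBdd f) {lam : ℝ} (hlam : lam ∈ Ioo 0 (proxThreshold f)) {xb : E}
    (hcrit : (0 : E) ∈ lsubd (moreauEnv f lam) xb) : f xb ≤ moreauEnv f lam xb := by
  by_contra! h
  obtain ⟨c, hec, hcf⟩ := EReal.exists_between_coe_real h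
  obtain ⟨δ, hδ, hfc⟩ := Metric.eventually_nhds_iff.mp (hlsc xb c hcf)
  obtain ⟨M, hM⟩ := exists_norm_sub_le_of_lt_proxThreshold hpb hlam xb 1 c
  obtain ⟨xs, vs, hxs, henv, hvs, hsub⟩ := hcrit
  have hlam0 := hlam.1
  -- small enough that the subgradient term `2λ (‖v‖ + ε) M` below is at most `δ² / 8`
  set ε := δ ^ 2 / (32 * lam * (|M| + 1))
  have hε : 0 < ε := by positivity
  obtain ⟨k, hxk, hvk, hek⟩ :=
    ((hxs.eventually (Metric.ball_mem_nhds xb (lt_min one_pos (half_pos hδ)))).and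
      ((hvs.eventually (Metric.closedBall_mem_nhds 0 hε)).and
        (henv.eventually_lt_const hec))).exists
  have hxk1 : xs k ∈ Metric.closedBall xb 1 :=
    Metric.ball_subset_closedBall (Metric.ball_subset_ball (min_le_left _ _) hxk)
  obtain ⟨z, hzc, hzx⟩ := exists_near_minimizer_sq_norm_sub_le (η := δ ^ 2 / 8) hlam0 (hsub k)
    hε (by positivity) hek (fun z hz => hM (xs k) hxk1 z hz.le)
  have hvk : ‖vs k‖ ≤ ε := by simpa using hvk
  have hslope : 2 * lam * (‖vs k‖ + ε) * M ≤ δ ^ 2 / 8 :=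
    calc 2 * lam * (‖vs k‖ + ε) * M ≤ 2 * lam * (2 * ε) * |M| := by
          have h1 : (‖vs k‖ + ε) * M ≤ 2 * ε * |M| :=
            (mul_le_mul_of_nonneg_left (le_abs_self M) (by positivity)).trans
              (mul_le_mul_of_nonneg_right (by linarith) (abs_nonneg M))
          linarith [mul_le_mul_of_nonneg_left h1 (by positivity : (0 : ℝ) ≤ 2 * lam)]
      _ = δ ^ 2 / 8 * (|M| / (|M| + 1)) := by
          simp only [ε]; field_simp; ring
      _ ≤ δ ^ 2 / 8 := mul_le_of_le_one_right (by positivity)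
          ((div_le_one (by positivity)).mpr (by linarith))
  have hzx : ‖z - xs k‖ ≤ δ / 2 := by nlinarith [norm_nonneg (z - xs k)]
  have hzxb : dist z xb < δ :=
    calc dist z xb ≤ dist z (xs k) + dist (xs k) xb := dist_triangle _ _ _
      _ < δ / 2 + δ / 2 := by
          rw [dist_eq_norm]
          exact add_lt_add_of_le_of_lt hzx (lt_of_lt_of_le hxk (min_le_right _ _))
      _ = δ := add_halves δ
  exact (hfc hzxb).not_ge (le_add_of_nonneg_right (by exact_mod_cast by positivity) |>.trans hzc.le)

theorem stmt1_general {n : ℕ} (f : EuclideanSpace ℝ (Fin n) → EReal)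
    (hlsc : LowerSemicontinuous f) (hpb : ProxBdd f)
    (lam : ℝ) (hlam : lam ∈ Set.Ioo 0 (proxThreshold f))
    (xb : EuclideanSpace ℝ (Fin n))
    (hcrit : (0 : EuclideanSpace ℝ (Fin n)) ∈ lsubd (moreauEnv f lam) xb) :
    xb ∈ proxPts f lam xb ∧ moreauEnv f lam xb = f xb := by
  have hle := le_moreauEnv_of_zero_mem_lsubd hlsc hpb hlam hcrit
  refine ⟨fun z => ?_, le_antisymm (moreauEnv_le_self f lam xb) hle⟩
  simpa using hle.trans (moreauEnv_le f lam xb z)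

theorem stmt1 {n : ℕ} (f : EuclideanSpace ℝ (Fin n) → EReal)
    (hproper : IsProperFn f) (hlsc : LowerSemicontinuous f) (hpb : ProxBdd f)
    (lam : ℝ) (hlam : lam ∈ Set.Ioo 0 (proxThreshold f))
    (xb : EuclideanSpace ℝ (Fin n)) (hdom : f xb ≠ ⊤)
    (hcrit : (0 : EuclideanSpace ℝ (Fin n)) ∈ lsubd (moreauEnv f lam) xb) :
    xb ∈ proxPts f lam xb ∧ moreauEnv f lam xb = f xb :=
  stmt1_general f hlsc hpb lam hlam xb hcrit
end
end

section
/- Let f : ℝⁿ → ℝ ∪ {∞} be proper and lower semicontinuous, and Ω ⊆ dom ∂f a nonempty compact set on which f is constant. If f satisfies the level-set subdifferential error bound (LSEB) at each point of Ω, then f satisfies the uniformized level-set subdifferential error bound (u-LSEB) on Ω: there exist γ ≥ 0, μ > 0, ε > 0, ν > 0 such that d(x, {z : f(z) ≤ f(x̄)})^γ ≤ μ · d(0, ∂f(x)) for every x̄ ∈ Ω and every x with d(x, Ω) < ε and f(x̄) < f(x) < f(x̄) + ν. -/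
open Filter Topology Set
open scoped ENNReal NNReal RealInnerProductSpace

noncomputable section

variable {E : Type*} [NormedAddCommGroup E] [InnerProductSpace ℝ E]

/-!
Each point of `Ω` has a ball on which the error bound holds with its own exponent and
constants. By compactness finitely many of these balls cover a uniform thickening of `Ω`, and
`f` takes the same value at all their centres. The largest exponent and constant and the
smallest level width over these centres then work on every ball: raising the exponent only
decreases `d(x, [f ≤ f x̄])^γ` while this distance is at most `1`, which holds on balls of
radius at most `1` centred in the level set.
-/

def LSEBOnBall (f : E → EReal) (xb : E) (γ μ η ν : ℝ) : Prop :=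
  ∀ x ∈ Metric.ball xb η, f xb < f x → f x < f xb + (ν : EReal) →
    Metric.infEDist x (slev f (f xb)) ^ γ ≤ ENNReal.ofReal μ * subdist f x

theorem LSEBOnBall.mono {f : E → EReal} {xb : E} {γ γ' μ μ' η ν ν' : ℝ}
    (h : LSEBOnBall f xb γ μ η ν) (hγ : γ ≤ γ') (hμ : μ ≤ μ') (hν : ν' ≤ ν) (hη : η ≤ 1) :
    LSEBOnBall f xb γ' μ' η ν' := by
  intro x hx hlo hhi
  replace hhi : f x < f xb + (ν : EReal) := hhi.trans_le (by gcongr)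
  have hdist_le_one : Metric.infEDist x (slev f (f xb)) ≤ 1 := calc
    Metric.infEDist x (slev f (f xb)) ≤ edist x xb :=
      Metric.infEDist_le_edist_of_mem (le_refl (f xb))
    _ ≤ 1 := by
      rw [edist_dist, ← ENNReal.ofReal_one]
      exact ENNReal.ofReal_le_ofReal ((Metric.mem_ball.1 hx).le.trans hη)
  calc Metric.infEDist x (slev f (f xb)) ^ γ'
      ≤ Metric.infEDist x (slev f (f xb)) ^ γ :=
        ENNReal.rpow_le_rpow_of_exponent_ge hdist_le_one hγ
    _ ≤ ENNReal.ofReal μ * subdist f x := h x hx hlo hhi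
    _ ≤ ENNReal.ofReal μ' * subdist f x := by gcongr

theorem LSEBAt.exists_LSEBOnBall {f : E → EReal} {xb : E} {γ μ : ℝ} (h : LSEBAt f xb γ μ) :
    ∃ η > 0, η ≤ 1 ∧ ∃ ν > 0, LSEBOnBall f xb γ μ η ν := by
  obtain ⟨η, hη, ν, hν, hbound⟩ := h
  exact ⟨min η 1, lt_min hη one_pos, min_le_right _ _, ν, hν,
    fun x hx => hbound x (Metric.ball_subset_ball (min_le_left _ _) hx)⟩

theorem IsCompact.exists_finset_thickening_subset_iUnion_ball {α : Type*} [PseudoMetricSpace α]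
    {Ω : Set α} (hΩ : IsCompact Ω) {η : α → ℝ} (hη : ∀ x ∈ Ω, 0 < η x) :
    ∃ t : Finset α, ↑t ⊆ Ω ∧ ∃ ε > 0, Metric.thickening ε Ω ⊆ ⋃ i ∈ t, Metric.ball i (η i) := by
  obtain ⟨t, htΩ, hcover⟩ := hΩ.elim_nhds_subcover (fun x => Metric.ball x (η x))
    fun x hx => Metric.ball_mem_nhds x (hη x hx)
  obtain ⟨ε, hε, hthick⟩ := hΩ.exists_thickening_subset_open
    (isOpen_biUnion fun i _ => Metric.isOpen_ball) hcover
  exact ⟨t, htΩ, ε, hε, hthick⟩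

theorem uLSEB_of_forall_mem_finset_LSEBOnBall {f : E → EReal} {Ω : Set E} {γ μ ε ν : ℝ}
    {η : E → ℝ} {t : Finset E} (hconst : ∀ x ∈ Ω, ∀ y ∈ Ω, f x = f y) (htΩ : ↑t ⊆ Ω)
    (hε : 0 < ε) (hcover : Metric.thickening ε Ω ⊆ ⋃ i ∈ t, Metric.ball i (η i))
    (hν : 0 < ν) (hloc : ∀ i ∈ t, LSEBOnBall f i γ μ (η i) ν) : uLSEB f Ω γ μ := by
  refine ⟨ε, hε, ν, hν, fun xb hxb x hx hlo hhi => ?_⟩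
  obtain ⟨i, hi, hxi⟩ :=
    mem_iUnion₂.1 (hcover ((Metric.mem_thickening_iff_infDist_lt ⟨xb, hxb⟩).2 hx))
  have hloc_i := hloc i hi x hxi
  rw [hconst i (htΩ hi) xb hxb] at hloc_i
  exact hloc_i hlo hhi

theorem stmt4_general {n : ℕ} (f : EuclideanSpace ℝ (Fin n) → EReal)
    (Ω : Set (EuclideanSpace ℝ (Fin n))) (hcpt : IsCompact Ω)
    (hconst : ∀ x ∈ Ω, ∀ y ∈ Ω, f x = f y)
    (hl : ∀ xb ∈ Ω, ∃ γ ≥ (0:ℝ), ∃ μ > (0:ℝ), LSEBAt f xb γ μ) :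
    ∃ γ ≥ (0:ℝ), ∃ μ > (0:ℝ), uLSEB f Ω γ μ := by
  choose! γ _ μ _ hLSEB using hl
  choose! η hη hη_le_one ν hν hball using fun xb hxb => (hLSEB xb hxb).exists_LSEBOnBall
  obtain ⟨t, htΩ, ε, hε, hcover⟩ := hcpt.exists_finset_thickening_subset_iUnion_ball hη
  obtain ⟨γ₀, hγ₀, hγt⟩ := ((eventually_ge_atTop 0).and
    ((eventually_all_finset t).2 fun i _ => eventually_ge_atTop (γ i))).exists
  obtain ⟨μ₀, hμ₀, hμt⟩ := ((eventually_gt_atTop 0).and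
    ((eventually_all_finset t).2 fun i _ => eventually_ge_atTop (μ i))).exists
  obtain ⟨ν₀, hν₀, hνt⟩ := ((eventually_mem_nhdsWithin (a := (0:ℝ)) (s := Ioi 0)).and
    ((eventually_all_finset t).2 fun i hi => Ioc_mem_nhdsGT (hν i (htΩ hi)))).exists
  exact ⟨γ₀, hγ₀, μ₀, hμ₀, uLSEB_of_forall_mem_finset_LSEBOnBall hconst htΩ hε hcover hν₀
    fun i hi => (hball i (htΩ hi)).mono (hγt i hi) (hμt i hi) (hνt i hi).2
      (hη_le_one i (htΩ hi))⟩

theorem stmt4 {n : ℕ} (f : EuclideanSpace ℝ (Fin n) → EReal)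
    (hproper : IsProperFn f) (hlsc : LowerSemicontinuous f)
    (Ω : Set (EuclideanSpace ℝ (Fin n))) (hne : Ω.Nonempty) (hcpt : IsCompact Ω)
    (hdom : ∀ x ∈ Ω, (lsubd f x).Nonempty)
    (hconst : ∀ x ∈ Ω, ∀ y ∈ Ω, f x = f y)
    (hl : ∀ xb ∈ Ω, ∃ γ ≥ (0:ℝ), ∃ μ > (0:ℝ), LSEBAt f xb γ μ) :
    ∃ γ ≥ (0:ℝ), ∃ μ > (0:ℝ), uLSEB f Ω γ μ :=
  stmt4_general f Ω hcpt hconst hl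
end
end

section
/- Let f : ℝⁿ → ℝ ∪ {∞} be proper and lower semicontinuous, and Ω ⊆ dom f a nonempty compact set on which f takes a constant value. If f satisfies the local Hölder error bound (LHEB) at each point of Ω, then f satisfies the uniformized Hölder error bound (u-HEB) on Ω: there exist γ > 0, μ > 0, ε > 0 such that d(x, {z : f(z) ≤ f(x̄)})^γ ≤ μ (f(x) - f(x̄)) for every x̄ ∈ Ω and every x with d(x, Ω) < ε and f(x) > f(x̄). -/
open Filter Topology Set
open scoped ENNReal NNReal RealInnerProductSpace

noncomputable section

variable {E : Type*} [NormedAddCommGroup E] [InnerProductSpace ℝ E]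

/- Near `Ω` every point lies in one of finitely many LHEB balls centred in `Ω` (compactness).
Since `f` is constant on `Ω`, all centres share one sublevel set, and within distance `1` of `Ω`
the distance to it is at most `1`, so the largest of the finitely many exponents and constants
works everywhere. -/

theorem IsCompact.exists_finset_thickening_subset_biUnion_ball {X : Type*} [PseudoMetricSpace X]
    {K : Set X} (hK : IsCompact K) {r : X → ℝ} (hr : ∀ x ∈ K, 0 < r x) :
    ∃ t : Finset X, (∀ i ∈ t, i ∈ K) ∧
      ∃ ε > 0, Metric.thickening ε K ⊆ ⋃ i ∈ t, Metric.ball i (r i) := by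
  obtain ⟨t, htK, hKt⟩ :=
    hK.elim_nhds_subcover (fun x => Metric.ball x (r x)) fun x hx =>
      Metric.ball_mem_nhds x (hr x hx)
  obtain ⟨ε, hε, hthick⟩ :=
    hK.exists_thickening_subset_open (isOpen_biUnion fun i _ => Metric.isOpen_ball) hKt
  exact ⟨t, htK, ε, hε, hthick⟩

theorem Finset.exists_pos_forall_le {ι : Type*} (t : Finset ι) (g : ι → ℝ) :
    ∃ M > 0, ∀ i ∈ t, g i ≤ M := by
  obtain ⟨M, hM⟩ := (t.image g).exists_le
  exact ⟨max M 1, by positivity, fun i hi =>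
    (hM _ (mem_image_of_mem g hi)).trans (le_max_left _ _)⟩

theorem ENNReal.rpow_le_ofReal_mul_of_le_one {d a : ℝ≥0∞} {γ γ' μ μ' : ℝ} (hd : d ≤ 1)
    (hγ : γ ≤ γ') (hμ : μ ≤ μ') (h : d ^ γ ≤ ENNReal.ofReal μ * a) :
    d ^ γ' ≤ ENNReal.ofReal μ' * a :=
  calc d ^ γ' ≤ d ^ γ := ENNReal.rpow_le_rpow_of_exponent_ge hd hγ
    _ ≤ ENNReal.ofReal μ * a := h
    _ ≤ ENNReal.ofReal μ' * a := by gcongr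

theorem stmt5_general {n : ℕ} (f : EuclideanSpace ℝ (Fin n) → EReal)
    (Ω : Set (EuclideanSpace ℝ (Fin n))) (hcpt : IsCompact Ω)
    (hconst : ∀ x ∈ Ω, ∀ y ∈ Ω, f x = f y)
    (hl : ∀ xb ∈ Ω, ∃ γ > (0:ℝ), ∃ μ > (0:ℝ), LHEBAt f xb γ μ) :
    ∃ γ > (0:ℝ), ∃ μ > (0:ℝ), uHEB f Ω γ μ := by
  choose! γ hγ μ hμ η hη hbound using hl
  obtain ⟨t, htΩ, ε, hε, hcover⟩ := hcpt.exists_finset_thickening_subset_biUnion_ball hη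
  obtain ⟨γ₀, hγ₀, hγt⟩ := t.exists_pos_forall_le γ
  obtain ⟨μ₀, hμ₀, hμt⟩ := t.exists_pos_forall_le μ
  refine ⟨γ₀, hγ₀, μ₀, hμ₀, min ε 1, by positivity, fun xb hxb x hx hfx => ?_⟩
  have hx' : x ∈ Metric.thickening (min ε 1) Ω :=
    (Metric.mem_thickening_iff_infDist_lt ⟨xb, hxb⟩).2 hx
  obtain ⟨i, hi, hxi⟩ :=
    mem_iUnion₂.1 (hcover (Metric.thickening_mono (min_le_left _ _) _ hx'))
  have hfi : f i = f xb := hconst i (htΩ i hi) xb hxb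
  have hΩlev : Ω ⊆ slev f (f xb) := fun y hy => (hconst y hy xb hxb).le
  have hd : Metric.infEDist x (slev f (f xb)) ≤ 1 :=
    calc Metric.infEDist x (slev f (f xb)) ≤ Metric.infEDist x Ω := Metric.infEDist_anti hΩlev
      _ ≤ ENNReal.ofReal (min ε 1) := (Metric.mem_thickening_iff_infEDist_lt.1 hx').le
      _ ≤ 1 := ENNReal.ofReal_le_one.2 (min_le_right _ _)
  have hlocal := hbound i (htΩ i hi) x hxi (hfi ▸ hfx)
  rw [hfi] at hlocal
  exact ENNReal.rpow_le_ofReal_mul_of_le_one hd (hγt i hi) (hμt i hi) hlocal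

theorem stmt5 {n : ℕ} (f : EuclideanSpace ℝ (Fin n) → EReal)
    (hproper : IsProperFn f) (hlsc : LowerSemicontinuous f)
    (Ω : Set (EuclideanSpace ℝ (Fin n))) (hne : Ω.Nonempty) (hcpt : IsCompact Ω)
    (hdom : ∀ x ∈ Ω, f x ≠ ⊤)
    (hconst : ∀ x ∈ Ω, ∀ y ∈ Ω, f x = f y)
    (hl : ∀ xb ∈ Ω, ∃ γ > (0:ℝ), ∃ μ > (0:ℝ), LHEBAt f xb γ μ) :
    ∃ γ > (0:ℝ), ∃ μ > (0:ℝ), uHEB f Ω γ μ :=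
  stmt5_general f Ω hcpt hconst hl

end
end

section
/- Let f : ℝⁿ → ℝ ∪ {∞} be proper and lower semicontinuous and suppose f satisfies the level-set subdifferential error bound (LSEB) at x̄ with exponent γ₂ ≥ 0 and constant μ₂ > 0. Then f satisfies the local Hölder error bound (LHEB) at x̄ with exponent γ₃ = γ₂ + 1 and constant μ₃ = ((γ₂+1)^{γ₂+1} / γ₂^{γ₂}) μ₂. -/
open Filter Topology Set
open scoped ENNReal NNReal RealInnerProductSpace

noncomputable section

variable {E : Type*} [NormedAddCommGroup E] [InnerProductSpace ℝ E]

/-!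
Fix `x` near `x̄` with `f x = f x̄ + r`, and minimise `f + c √(‖· - x‖² + β²)` over a closed
ball around `x` (an Ekeland-type step; the smoothing makes the penalty differentiable). The
minimiser `u` satisfies `f u + c ‖u - x‖ ≤ f x + c β`, so either `u` already lies in the
sublevel set `S`, or it is an interior minimiser, hence carries a subgradient of norm `≤ c`,
and LSEB at `u` gives `d(u, S)^γ ≤ μ c`. Writing `Q = r / c`, in both cases
`d(x, S) ≤ Q + β + (μ r / Q)^(1/γ)`; the choice `Q^(γ+1) = μ r / γ^γ` and `β → 0` give
`d(x, S) ≤ (γ + 1) Q`, which is the Hölder bound. For `γ = 0` the second case is impossible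
as soon as `μ c < 1`.
-/

theorem Real.rpow_self_pos {γ : ℝ} (hγ : 0 ≤ γ) : 0 < γ ^ γ := by
  rcases hγ.eq_or_lt with rfl | hγ
  · simp
  · exact Real.rpow_pos_of_pos hγ γ

theorem Real.lt_mul_mul_rpow_of_rpow_inv_lt {γ s Q : ℝ} (hγ : 0 ≤ γ) (hs : 0 ≤ s)
    (h : (s / γ ^ γ) ^ (γ + 1)⁻¹ < Q) : s < Q * (γ * Q) ^ γ := by
  have hγγ := Real.rpow_self_pos hγ
  have hQ : 0 < Q := (by positivity : (0 : ℝ) ≤ _).trans_lt h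
  have hpow : s / γ ^ γ < Q ^ (γ + 1) := by
    simpa [Real.rpow_inv_rpow (by positivity : 0 ≤ s / γ ^ γ) (by positivity : γ + 1 ≠ 0)]
      using Real.rpow_lt_rpow (by positivity) h (by positivity : 0 < γ + 1)
  rw [div_lt_iff₀ hγγ, Real.rpow_add hQ, Real.rpow_one] at hpow
  rw [Real.mul_rpow hγ hQ.le]
  linarith

theorem Real.add_one_mul_rpow_inv_eq {γ s : ℝ} (hγ : 0 ≤ γ) (hs : 0 ≤ s) :
    (γ + 1) * (s / γ ^ γ) ^ (γ + 1)⁻¹ = ((γ + 1) ^ (γ + 1) / γ ^ γ * s) ^ (γ + 1)⁻¹ := by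
  have hγγ := Real.rpow_self_pos hγ
  rw [div_mul_eq_mul_div, mul_div_assoc, Real.mul_rpow (by positivity) (by positivity),
    Real.rpow_rpow_inv (by positivity) (by positivity)]

theorem Real.add_one_rpow_div_rpow_self_pos {γ : ℝ} (hγ : 0 ≤ γ) :
    0 < (γ + 1) ^ (γ + 1) / γ ^ γ :=
  div_pos (Real.rpow_pos_of_pos (by linarith) _) (Real.rpow_self_pos hγ)

theorem fsubd_subset_lsubd (f : E → EReal) (u : E) : fsubd f u ⊆ lsubd f u :=
  fun _ hv => ⟨fun _ => u, fun _ => _, tendsto_const_nhds, tendsto_const_nhds,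
    tendsto_const_nhds, fun _ => hv⟩

theorem subdist_le_of_mem_lsubd {f : E → EReal} {u v : E} (hv : v ∈ lsubd f u) :
    subdist f u ≤ ENNReal.ofReal ‖v‖ :=
  (Metric.infEDist_le_edist_of_mem hv).trans_eq (by rw [edist_dist, dist_zero_left])

theorem neg_mem_fsubd_of_isLocalMin_add {f : E → EReal} {g : E → ℝ} {u w : E} {A : ℝ}
    (hfu : f u = A) (hg : HasFDerivAt g (innerSL ℝ w) u)
    (hmin : IsLocalMin (fun y => f y + g y) u) : -w ∈ fsubd f u := by
  refine ⟨by simp [hfu], by simp [hfu], fun ε hε => ?_⟩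
  filter_upwards [hg.isLittleO.def hε, hmin] with y hy hmy
  simp only [hfu, EReal.toReal_coe, inner_neg_left, innerSL_apply_apply] at hy hmy ⊢
  generalize f y = z at hmy ⊢
  induction z using EReal.rec with
  | bot => simp at hmy
  | top => exact le_top
  | coe B =>
    rw [← EReal.coe_add, ← EReal.coe_add, EReal.coe_le_coe_iff] at hmy
    rw [EReal.coe_le_coe_iff]
    rw [Real.norm_eq_abs, abs_le] at hy
    linarith [hy.1]

theorem hasFDerivAt_sqrt_norm_sub_sq_add_sq (x u : E) {β : ℝ} (hβ : β ≠ 0) :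
    HasFDerivAt (fun y => √(‖y - x‖ ^ 2 + β ^ 2))
      (innerSL ℝ ((√(‖u - x‖ ^ 2 + β ^ 2))⁻¹ • (u - x))) u := by
  refine (((((hasFDerivAt_id u).sub_const x).norm_sq).add_const (β ^ 2)).sqrt
    (by positivity)).congr_fderiv ?_
  ext h
  simp only [id_eq, one_div, mul_inv_rev, map_sub, ContinuousLinearMap.comp_id,
    _root_.smul_apply, _root_.sub_apply, coe_innerSL_apply,
    nsmul_eq_mul, Nat.cast_ofNat, smul_eq_mul, map_smul]
  ring

theorem norm_inv_sqrt_norm_sq_add_sq_smul_le_one (d : E) (β : ℝ) :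
    ‖(√(‖d‖ ^ 2 + β ^ 2))⁻¹ • d‖ ≤ 1 := by
  rw [norm_smul, norm_inv, Real.norm_of_nonneg (Real.sqrt_nonneg _)]
  exact inv_mul_le_one_of_le₀ (Real.le_sqrt_of_sq_le (by nlinarith)) (Real.sqrt_nonneg _)

theorem exists_prox_point [ProperSpace E] {f : E → EReal} (hbot : ∀ z, f z ≠ ⊥)
    (hlsc : LowerSemicontinuous f) {x : E} {a : ℝ} (hfx : f x = a) {c β R : ℝ} (hc : 0 ≤ c)
    (hβ : 0 < β) (hR : 0 ≤ R) :
    ∃ u, ∃ A : ℝ, f u = A ∧ dist u x ≤ R ∧ A + c * ‖u - x‖ ≤ a + c * β ∧ A ≤ a ∧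
      (dist u x < R → subdist f u ≤ ENNReal.ofReal c) := by
  set s : E → ℝ := fun y => √(‖y - x‖ ^ 2 + β ^ 2)
  have hs_cont : Continuous s := by fun_prop
  have hF : LowerSemicontinuous fun y => f y + ((c * s y : ℝ) : EReal) :=
    hlsc.add' (continuous_coe_real_ereal.comp (hs_cont.const_smul c)).lowerSemicontinuous
      fun z => EReal.continuousAt_add (Or.inr (EReal.coe_ne_bot _)) (Or.inl (hbot z))
  obtain ⟨u, huR, humin⟩ := (hF.lowerSemicontinuousOn _).exists_isMinOn
    ⟨x, Metric.mem_closedBall_self hR⟩ (isCompact_closedBall x R)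
  have hsx : s x = β := by simp [s, Real.sqrt_sq hβ.le]
  have hux : f u + ((c * s u : ℝ) : EReal) ≤ a + ((c * β : ℝ) : EReal) := by
    simpa only [hsx, hfx] using isMinOn_iff.mp humin x (Metric.mem_closedBall_self hR)
  have hfu : f u ≠ ⊤ := fun h => by
    rw [h, EReal.top_add_coe, ← EReal.coe_add, top_le_iff] at hux
    exact EReal.coe_ne_top _ hux
  lift f u to ℝ using ⟨hfu, hbot u⟩ with A hA
  rw [← EReal.coe_add, ← EReal.coe_add, EReal.coe_le_coe_iff] at hux
  have hnorm_le : ‖u - x‖ ≤ s u := Real.le_sqrt_of_sq_le (by nlinarith)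
  have hβ_le : β ≤ s u := Real.le_sqrt_of_sq_le (by nlinarith [sq_nonneg ‖u - x‖])
  refine ⟨u, A, hA.symm, huR, by nlinarith, by nlinarith, fun hlt => ?_⟩
  set w := (s u)⁻¹ • (u - x)
  have hderiv : HasFDerivAt (fun y => c * s y) (innerSL ℝ (c • w)) u := by
    rw [map_smulₛₗ, starRingEnd_apply, star_trivial]
    exact (hasFDerivAt_sqrt_norm_sub_sq_add_sq x u hβ.ne').const_mul c
  have hmin : IsLocalMin (fun y => f y + ((c * s y : ℝ) : EReal)) u :=
    humin.isLocalMin (Metric.closedBall_mem_nhds_of_mem hlt)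
  have hv := fsubd_subset_lsubd f u (neg_mem_fsubd_of_isLocalMin_add hA.symm hderiv hmin)
  refine (subdist_le_of_mem_lsubd hv).trans (ENNReal.ofReal_le_ofReal ?_)
  rw [norm_neg, norm_smul, Real.norm_of_nonneg hc]
  exact mul_le_of_le_one_right hc (norm_inv_sqrt_norm_sq_add_sq_smul_le_one _ _)

theorem infEDist_slev_le_or_exists_subdist_le [ProperSpace E] {f : E → EReal}
    (hbot : ∀ z, f z ≠ ⊥) (hlsc : LowerSemicontinuous f) {x : E} {α a : ℝ} (hfx : f x = a)
    (hαa : α < a) {Q β : ℝ} (hQ : 0 < Q) (hβ : 0 < β) :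
    Metric.infEDist x (slev f α) ≤ ENNReal.ofReal (Q + β) ∨
      ∃ u, dist u x < Q + β ∧ (α : EReal) < f u ∧ f u ≤ f x ∧
        subdist f u ≤ ENNReal.ofReal ((a - α) / Q) := by
  have hc : 0 < (a - α) / Q := div_pos (sub_pos.2 hαa) hQ
  obtain ⟨u, A, hA, hux, hAx, hAa, hsub⟩ :=
    exists_prox_point hbot hlsc hfx hc.le hβ (R := Q + β) (by positivity)
  by_cases huS : A ≤ α
  · left
    calc Metric.infEDist x (slev f α) ≤ edist x u :=
          Metric.infEDist_le_edist_of_mem (show f u ≤ α by rw [hA]; exact_mod_cast huS)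
      _ ≤ ENNReal.ofReal (Q + β) := by
          rw [edist_dist, dist_comm]; exact ENNReal.ofReal_le_ofReal hux
  · right
    have hcQ : (a - α) / Q * Q = a - α := div_mul_cancel₀ _ hQ.ne'
    have hlt : dist u x < Q + β := by
      rw [dist_eq_norm]
      by_contra! h
      nlinarith [mul_le_mul_of_nonneg_left h hc.le]
    refine ⟨u, hlt, by rw [hA]; exact_mod_cast not_le.1 huS, by rw [hA, hfx]; exact_mod_cast hAa,
      hsub hlt⟩

theorem infEDist_slev_le_of_subdist_le [ProperSpace E] {f : E → EReal}
    (hbot : ∀ z, f z ≠ ⊥) (hlsc : LowerSemicontinuous f) {x : E} {α a : ℝ} (hfx : f x = a)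
    (hαa : α < a) {γ μ Q β : ℝ} (hγ : 0 ≤ γ) (hμ : 0 ≤ μ) (hQ : 0 < Q) (hβ : 0 < β)
    (hQμ : μ * (a - α) < Q * (γ * Q) ^ γ)
    (hLS : ∀ u, dist u x < Q + β → (α : EReal) < f u → f u ≤ f x →
      Metric.infEDist u (slev f α) ^ γ ≤ ENNReal.ofReal μ * subdist f u) :
    Metric.infEDist x (slev f α) ≤ ENNReal.ofReal ((γ + 1) * Q + β) := by
  rcases infEDist_slev_le_or_exists_subdist_le hbot hlsc hfx hαa hQ hβ with
    h | ⟨u, hux, hαu, hfu, hsub⟩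
  · exact h.trans (ENNReal.ofReal_le_ofReal (by nlinarith))
  have hpow : Metric.infEDist u (slev f α) ^ γ < ENNReal.ofReal (γ * Q) ^ γ := calc
    Metric.infEDist u (slev f α) ^ γ ≤ ENNReal.ofReal μ * ENNReal.ofReal ((a - α) / Q) :=
        (hLS u hux hαu hfu).trans (mul_le_mul_right hsub _)
    _ = ENNReal.ofReal (μ * (a - α) / Q) := by rw [← ENNReal.ofReal_mul hμ, mul_div_assoc]
    _ < ENNReal.ofReal ((γ * Q) ^ γ) :=
        (ENNReal.ofReal_lt_ofReal_iff_of_nonneg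
          (div_nonneg (mul_nonneg hμ (sub_nonneg.2 hαa.le)) hQ.le)).2 ((div_lt_iff₀' hQ).2 hQμ)
    _ = ENNReal.ofReal (γ * Q) ^ γ := (ENNReal.ofReal_rpow_of_nonneg (by positivity) hγ).symm
  -- for `γ = 0`, `hpow` reads `1 < 1`: the LSEB rules this case out
  have hu : Metric.infEDist u (slev f α) < ENNReal.ofReal (γ * Q) :=
    lt_of_not_ge fun h => (ENNReal.rpow_le_rpow h hγ).not_gt hpow
  calc Metric.infEDist x (slev f α) ≤ edist x u + Metric.infEDist u (slev f α) :=
        Metric.infEDist_le_edist_add_infEDist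
    _ ≤ ENNReal.ofReal (Q + β) + ENNReal.ofReal (γ * Q) := by
        rw [edist_dist, dist_comm]
        exact add_le_add (ENNReal.ofReal_le_ofReal hux.le) hu.le
    _ = ENNReal.ofReal ((γ + 1) * Q + β) := by
        rw [← ENNReal.ofReal_add (by positivity) (by positivity)]; ring_nf

theorem infEDist_slev_le_rpow_inv_of_subdist_le [ProperSpace E] {f : E → EReal}
    (hbot : ∀ z, f z ≠ ⊥) (hlsc : LowerSemicontinuous f) {x : E} {α a : ℝ} (hfx : f x = a)
    (hαa : α < a) {γ μ ρ : ℝ} (hγ : 0 ≤ γ) (hμ : 0 ≤ μ)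
    (hρ : ((γ + 1) ^ (γ + 1) / γ ^ γ * μ * (a - α)) ^ (γ + 1)⁻¹ < ρ)
    (hLS : ∀ u, dist u x < ρ → (α : EReal) < f u → f u ≤ f x →
      Metric.infEDist u (slev f α) ^ γ ≤ ENNReal.ofReal μ * subdist f u) :
    Metric.infEDist x (slev f α) ≤
      ENNReal.ofReal (((γ + 1) ^ (γ + 1) / γ ^ γ * μ * (a - α)) ^ (γ + 1)⁻¹) := by
  have hs : 0 ≤ μ * (a - α) := mul_nonneg hμ (sub_nonneg.2 hαa.le)
  have hD := Real.add_one_mul_rpow_inv_eq hγ hs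
  rw [← mul_assoc] at hD
  set D := ((γ + 1) ^ (γ + 1) / γ ^ γ * μ * (a - α)) ^ (γ + 1)⁻¹
  refine ge_of_tendsto
    ((ENNReal.continuous_ofReal.tendsto D).mono_left (nhdsWithin_le_nhds (s := Ioi D))) ?_
  filter_upwards [Ioo_mem_nhdsGT hρ] with t ⟨hDt, htρ⟩
  obtain ⟨Q, hQ₀, hQt⟩ := exists_between
    (show (μ * (a - α) / γ ^ γ) ^ (γ + 1)⁻¹ < t / (γ + 1) by
      rw [lt_div_iff₀ (by positivity)]; linarith)
  have hQ : 0 < Q := (by positivity : (0 : ℝ) ≤ _).trans_lt hQ₀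
  have hQt' : (γ + 1) * Q < t := by rwa [lt_div_iff₀ (by positivity), mul_comm] at hQt
  have key := infEDist_slev_le_of_subdist_le hbot hlsc hfx hαa hγ hμ hQ (sub_pos.2 hQt')
    (Real.lt_mul_mul_rpow_of_rpow_inv_lt hγ hs hQ₀)
    fun u hu => hLS u (by linarith [mul_nonneg hγ hQ.le])
  rwa [add_sub_cancel] at key

theorem LSEBAt.exists_infEDist_slev_le [ProperSpace E] {f : E → EReal} (hbot : ∀ z, f z ≠ ⊥)
    (hlsc : LowerSemicontinuous f) {xb : E} {b γ μ : ℝ} (hb : f xb = b) (hγ : 0 ≤ γ)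
    (hμ : 0 < μ) (h : LSEBAt f xb γ μ) :
    ∃ η > 0, ∀ x ∈ Metric.ball xb η, ∀ a : ℝ, f x = a → b < a →
      Metric.infEDist x (slev f b) ≤
        ENNReal.ofReal (((γ + 1) ^ (γ + 1) / γ ^ γ * μ * (a - b)) ^ (γ + 1)⁻¹) := by
  obtain ⟨η, hη, ν, hν, hLS⟩ := h
  rw [hb] at hLS
  set κ := (γ + 1) ^ (γ + 1) / γ ^ γ * μ
  have hκ : 0 < κ := mul_pos (Real.add_one_rpow_div_rpow_self_pos hγ) hμ
  set ν' := min ν ((η / 2) ^ (γ + 1) / κ)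
  have hν' : 0 < ν' := lt_min hν (by positivity)
  have hκν' : (κ * ν') ^ (γ + 1)⁻¹ ≤ η / 2 := calc
    (κ * ν') ^ (γ + 1)⁻¹ ≤ (κ * ((η / 2) ^ (γ + 1) / κ)) ^ (γ + 1)⁻¹ :=
        Real.rpow_le_rpow (by positivity)
          (mul_le_mul_of_nonneg_left (min_le_right _ _) hκ.le) (by positivity)
    _ = η / 2 := by
        rw [mul_div_cancel₀ _ hκ.ne', Real.rpow_rpow_inv (by positivity) (by positivity)]
  refine ⟨min (η / 2) ((κ * ν') ^ (γ + 1)⁻¹), by positivity, fun x hx a hfx hba => ?_⟩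
  have hx := Metric.mem_ball.1 hx
  rcases le_or_gt ν' (a - b) with hlarge | hsmall
  · calc Metric.infEDist x (slev f b) ≤ edist x xb :=
          Metric.infEDist_le_edist_of_mem (show f xb ≤ b from hb.le)
      _ ≤ _ := by
          rw [edist_dist]
          refine ENNReal.ofReal_le_ofReal ((hx.trans_le (min_le_right _ _)).le.trans ?_)
          exact Real.rpow_le_rpow (by positivity)
            (mul_le_mul_of_nonneg_left hlarge hκ.le) (by positivity)
  refine infEDist_slev_le_rpow_inv_of_subdist_le hbot hlsc hfx (by linarith) hγ hμ.le
    (ρ := η / 2) ?_ fun u hu hbu hux => hLS u ?_ hbu ?_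
  · exact (Real.rpow_lt_rpow (by positivity) (mul_lt_mul_of_pos_left hsmall hκ)
      (by positivity)).trans_le hκν'
  · rw [Metric.mem_ball]
    linarith [dist_triangle u x xb, min_le_left (η / 2) ((κ * ν') ^ (γ + 1)⁻¹)]
  · refine hux.trans_lt (hfx ▸ ?_)
    exact_mod_cast (show a < b + ν by linarith [min_le_left ν ((η / 2) ^ (γ + 1) / κ)])

theorem stmt7 {n : ℕ} (f : EuclideanSpace ℝ (Fin n) → EReal)
    (hproper : IsProperFn f) (hlsc : LowerSemicontinuous f)
    (xb : EuclideanSpace ℝ (Fin n)) (γ₂ μ₂ : ℝ) (hγ : 0 ≤ γ₂) (hμ : 0 < μ₂)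
    (h : LSEBAt f xb γ₂ μ₂) :
    LHEBAt f xb (γ₂ + 1) ((γ₂ + 1) ^ (γ₂ + 1) / γ₂ ^ γ₂ * μ₂) := by
  by_cases hxb : f xb = ⊤
  · exact ⟨1, one_pos, fun x _ hlt => absurd hlt (by simp [hxb])⟩
  lift f xb to ℝ using ⟨hxb, hproper.2 xb⟩ with b hb
  obtain ⟨η, hη, hball⟩ := h.exists_infEDist_slev_le hproper.2 hlsc hb.symm hγ hμ
  refine ⟨η, hη, fun x hx hlt => ?_⟩
  set κ := (γ₂ + 1) ^ (γ₂ + 1) / γ₂ ^ γ₂ * μ₂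
  have hκ : 0 < κ := mul_pos (Real.add_one_rpow_div_rpow_self_pos hγ) hμ
  rw [← hb] at hlt ⊢
  by_cases hx_top : f x = ⊤
  · rw [hx_top, EReal.top_sub_coe, toENN, if_pos rfl,
      ENNReal.mul_top (ENNReal.ofReal_pos.2 hκ).ne']
    exact le_top
  lift f x to ℝ using ⟨hx_top, hproper.2 x⟩ with a ha
  have hba : b < a := by exact_mod_cast hlt
  calc Metric.infEDist x (slev f b) ^ (γ₂ + 1)
      ≤ ENNReal.ofReal ((κ * (a - b)) ^ (γ₂ + 1)⁻¹) ^ (γ₂ + 1) :=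
        ENNReal.rpow_le_rpow (hball x hx a ha.symm hba) (by linarith)
    _ = ENNReal.ofReal (κ * (a - b)) := by
        rw [ENNReal.ofReal_rpow_of_nonneg (by positivity) (by linarith),
          Real.rpow_inv_rpow (by nlinarith) (by linarith)]
    _ = ENNReal.ofReal κ * toENN (↑a - ↑b) := by
        rw [ENNReal.ofReal_mul hκ.le, toENN, ← EReal.coe_sub, if_neg (EReal.coe_ne_top _),
          EReal.toReal_coe]
end
end

section
/- Let f : ℝⁿ → ℝ ∪ {∞} be proper and lower semicontinuous with 0 ∈ ∂f(x̄), and suppose f is prox-regular at x̄ for v̄ = 0 with constant ρ ≥ 0. If f satisfies the level-set subdifferential error bound at x̄ with exponent γ₂ > 0 and constant μ₂ > 0, then f satisfies the Kurdyka–Łojasiewicz property at x̄ with exponent γ₁ = max{γ₂/(1+γ₂), γ₂/2} and constant μ₁ = (μ₂^{1/γ₂} + (ρ/2) μ₂^{2/γ₂})^{max{γ₂/(1+γ₂), γ₂/2}}. -/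
open Filter Topology Set
open scoped ENNReal NNReal RealInnerProductSpace

noncomputable section

variable {E : Type*} [NormedAddCommGroup E] [InnerProductSpace ℝ E]

/-! For `v ∈ ∂f(x)`, the gap `f x - f x̄` is bounded through the projection `y` of `x` onto
the sublevel set `[f ≤ f x̄]`: prox-regularity at `x` in the direction of `y` gives
`f x - f x̄ ≤ ‖v‖ d + (ρ/2) d²` with `d = dist(x, [f ≤ f x̄])`, and the error bound gives
`d ≤ (μ₂ ‖v‖)^(1/γ₂)`. Hence `f x - f x̄ ≤ μ₂^(1/γ₂) ‖v‖^(1+1/γ₂) + (ρ/2) μ₂^(2/γ₂) ‖v‖^(2/γ₂)`,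
and for `‖v‖ ≤ 1` both powers of `‖v‖` are at most `‖v‖^(1/γ₁)`. Large subgradients are handled
by shrinking the admissible range of `f x - f x̄`. -/

lemma le_mul_infEDist_of_forall {α : Type*} [PseudoEMetricSpace α] {a b : ℝ≥0∞} (h0 : a ≠ 0)
    (ht : a ≠ ⊤) {s : Set α} {x : α} (H : ∀ y ∈ s, b ≤ a * edist x y) :
    b ≤ a * Metric.infEDist x s := by
  rw [mul_comm, ← ENNReal.div_le_iff_le_mul (Or.inl h0) (Or.inl ht)]
  exact Metric.le_infEDist.2 fun y hy =>
    (ENNReal.div_le_iff_le_mul (Or.inl h0) (Or.inl ht)).2 (mul_comm a _ ▸ H y hy)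

lemma EReal.exists_coe_of_lt_of_lt_add {a b : EReal} {c : ℝ} (hab : a < b) (hb : b < a + c) :
    ∃ p q : ℝ, b = p ∧ a = q ∧ q < p ∧ p < q + c := by
  induction a using EReal.rec with
  | bot => exact absurd hb (by simp)
  | top => exact absurd hab not_top_lt
  | coe q =>
    induction b using EReal.rec with
    | bot => exact absurd hab not_lt_bot
    | top => exact absurd hb (by rw [← EReal.coe_add]; exact not_top_lt)
    | coe p => exact ⟨p, q, rfl, rfl, mod_cast hab, mod_cast hb⟩

lemma le_rpow_add_rpow_of_le_mul_add_sq {a t d ρ γ μ : ℝ} (hρ : 0 ≤ ρ) (hγ : 0 < γ) (hμ : 0 ≤ μ)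
    (ht : 0 ≤ t) (hd : 0 ≤ d) (hgap : a ≤ t * d + ρ / 2 * d ^ 2) (heb : d ^ γ ≤ μ * t) :
    a ≤ μ ^ (1 / γ) * t ^ (1 + 1 / γ) + ρ / 2 * μ ^ (2 / γ) * t ^ (2 / γ) := by
  have hd' : d ≤ μ ^ (1 / γ) * t ^ (1 / γ) := by
    rw [← Real.mul_rpow hμ ht, ← Real.rpow_le_rpow_iff hd (by positivity) hγ,
      ← Real.rpow_mul (by positivity), one_div_mul_cancel hγ.ne', Real.rpow_one]
    exact heb
  have hsq : d ^ 2 ≤ μ ^ (2 / γ) * t ^ (2 / γ) := by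
    calc d ^ 2 ≤ (μ ^ (1 / γ) * t ^ (1 / γ)) ^ 2 := by gcongr
      _ = μ ^ (2 / γ) * t ^ (2 / γ) := by
        rw [mul_pow, ← Real.rpow_mul_natCast hμ, ← Real.rpow_mul_natCast ht]
        ring_nf
  calc a ≤ t * d + ρ / 2 * d ^ 2 := hgap
    _ ≤ t * (μ ^ (1 / γ) * t ^ (1 / γ)) + ρ / 2 * (μ ^ (2 / γ) * t ^ (2 / γ)) := by gcongr
    _ = _ := by
      rw [Real.rpow_add' ht (by positivity), Real.rpow_one]
      ring

lemma mul_rpow_add_mul_rpow_le {t γ₁ γ₂ A B : ℝ} (ht₀ : 0 ≤ t) (ht₁ : t ≤ 1) (hγ₂ : 0 < γ₂)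
    (h₁ : γ₂ / (1 + γ₂) ≤ γ₁) (h₂ : γ₂ / 2 ≤ γ₁) (hA : 0 ≤ A) (hB : 0 ≤ B) :
    A * t ^ (1 + 1 / γ₂) + B * t ^ (2 / γ₂) ≤ (A + B) * t ^ (1 / γ₁) := by
  have e₁ : 1 / γ₁ ≤ 1 + 1 / γ₂ := by
    calc 1 / γ₁ ≤ 1 / (γ₂ / (1 + γ₂)) := one_div_le_one_div_of_le (by positivity) h₁
      _ = 1 + 1 / γ₂ := by field_simp; ring
  have e₂ : 1 / γ₁ ≤ 2 / γ₂ := by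
    calc 1 / γ₁ ≤ 1 / (γ₂ / 2) := one_div_le_one_div_of_le (by positivity) h₂
      _ = 2 / γ₂ := one_div_div γ₂ 2
  have m₁ : t ^ (1 + 1 / γ₂) ≤ t ^ (1 / γ₁) :=
    Real.rpow_le_rpow_of_exponent_ge_of_imp ht₀ ht₁ e₁ fun _ h => absurd h (by positivity)
  have m₂ : t ^ (2 / γ₂) ≤ t ^ (1 / γ₁) :=
    Real.rpow_le_rpow_of_exponent_ge_of_imp ht₀ ht₁ e₂ fun _ h => absurd h (by positivity)
  calc A * t ^ (1 + 1 / γ₂) + B * t ^ (2 / γ₂) ≤ A * t ^ (1 / γ₁) + B * t ^ (1 / γ₁) := by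
        gcongr
    _ = (A + B) * t ^ (1 / γ₁) := by ring

lemma rpow_le_mul_of_le_mul_rpow_inv {a C t γ : ℝ} (ha : 0 ≤ a) (hC : 0 ≤ C) (ht : 0 ≤ t)
    (hγ : 0 < γ) (h : a ≤ C * t ^ (1 / γ)) : a ^ γ ≤ C ^ γ * t := by
  calc a ^ γ ≤ (C * t ^ (1 / γ)) ^ γ := by gcongr
    _ = C ^ γ * t := by
      rw [Real.mul_rpow hC (by positivity), ← Real.rpow_mul ht, one_div_mul_cancel hγ.ne',
        Real.rpow_one]

lemma ProxRegularAt.exists_sub_le_norm_mul_dist {f : E → EReal} {xb : E} {ρ : ℝ}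
    (hpr : ProxRegularAt f xb 0 ρ) :
    ∃ ε > 0, ∀ x v y, ∀ p q : ℝ, f x = p → f xb = q → p < q + ε → v ∈ lsubd f x → ‖v‖ < ε →
      dist x xb < ε → dist y xb < ε → f y ≤ f xb →
      p - q ≤ ‖v‖ * dist x y + ρ / 2 * dist x y ^ 2 := by
  obtain ⟨-, ε, hε, hprox⟩ := hpr
  refine ⟨ε, hε, fun x v y p q hp hq hpq hv hvε hxε hyε hy => ?_⟩
  have h := (hprox x v hv (mem_ball_zero_iff.2 hvε) hxε (by rw [hp, hq]; exact_mod_cast hpq)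
    y hyε).trans (hy.trans_eq hq)
  rw [hp, ← EReal.coe_add, EReal.coe_le_coe_iff] at h
  have hyx : dist x y = ‖y - x‖ := by rw [dist_comm, dist_eq_norm]
  have hinner : -⟪v, y - x⟫ ≤ ‖v‖ * ‖y - x‖ := by
    rw [← inner_neg_right, ← norm_neg (y - x)]
    exact real_inner_le_norm v _
  rw [hyx]
  linarith

lemma LSEBAt.exists_infDist_rpow_le {f : E → EReal} {xb : E} {γ μ : ℝ} (hγ : 0 ≤ γ)
    (hμ : 0 ≤ μ) (h : LSEBAt f xb γ μ) :
    ∃ η > (0 : ℝ), ∃ ν > (0 : ℝ), ∀ x ∈ Metric.ball xb η, f xb < f x → f x < f xb + (ν : EReal) →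
      ∀ v ∈ lsubd f x, Metric.infDist x (slev f (f xb)) ^ γ ≤ μ * ‖v‖ := by
  obtain ⟨η, hη, ν, hν, hLS⟩ := h
  refine ⟨η, hη, ν, hν, fun x hx hl hu v hv => ?_⟩
  have hne : (slev f (f xb)).Nonempty := ⟨xb, le_refl (f xb)⟩
  have hsub : subdist f x ≤ ENNReal.ofReal ‖v‖ := by
    rw [← dist_zero_left, ← edist_dist]
    exact Metric.infEDist_le_edist_of_mem hv
  have h : Metric.infEDist x (slev f (f xb)) ^ γ ≤ ENNReal.ofReal μ * ENNReal.ofReal ‖v‖ :=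
    (hLS x hx hl hu).trans (mul_le_mul_right hsub _)
  rw [← ENNReal.ofReal_toReal (Metric.infEDist_ne_top hne),
    ENNReal.ofReal_rpow_of_nonneg ENNReal.toReal_nonneg hγ, ← ENNReal.ofReal_mul hμ,
    ENNReal.ofReal_le_ofReal_iff (by positivity)] at h
  exact h

lemma KLAt_of_forall_sub_le {f : E → EReal} {xb : E} {γ C : ℝ} (hγ : 0 < γ) (hC : 0 < C)
    (h : ∃ η > (0 : ℝ), ∃ ν > (0 : ℝ), ∀ x ∈ Metric.ball xb η, ∀ p q : ℝ, f x = p → f xb = q →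
      q < p → p < q + ν → ∀ v ∈ lsubd f x, p - q ≤ C * ‖v‖ ^ (1 / γ)) :
    KLAt f xb γ (C ^ γ) := by
  obtain ⟨η, hη, ν, hν, hbound⟩ := h
  refine ⟨η, hη, ν, hν, fun x hx hl hu => ?_⟩
  obtain ⟨p, q, hp, hq, hqp, hpq⟩ := EReal.exists_coe_of_lt_of_lt_add hl hu
  have hgap : toENN (f x - f xb) = ENNReal.ofReal (p - q) := by
    rw [hp, hq, ← EReal.coe_sub]
    simp only [toENN, if_neg (EReal.coe_ne_top _), EReal.toReal_coe]
  rw [hgap, subdist]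
  refine le_mul_infEDist_of_forall (ENNReal.ofReal_pos.2 (by positivity)).ne'
    ENNReal.ofReal_ne_top fun v hv => ?_
  rw [edist_dist, dist_zero_left, ENNReal.ofReal_rpow_of_nonneg (sub_nonneg.2 hqp.le) hγ.le,
    ← ENNReal.ofReal_mul (by positivity)]
  exact ENNReal.ofReal_le_ofReal <| rpow_le_mul_of_le_mul_rpow_inv (sub_nonneg.2 hqp.le) hC.le
    (norm_nonneg v) hγ (hbound x hx p q hp hq hqp hpq v hv)

theorem KLAt_of_LSEBAt_of_proxRegularAt [ProperSpace E] {f : E → EReal}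
    (hlsc : LowerSemicontinuous f) {xb : E} {ρ : ℝ} (hρ : 0 ≤ ρ) (hpr : ProxRegularAt f xb 0 ρ)
    {γ₂ μ₂ : ℝ} (hγ₂ : 0 < γ₂) (hμ₂ : 0 < μ₂) (h : LSEBAt f xb γ₂ μ₂) {γ₁ : ℝ}
    (h₁ : γ₂ / (1 + γ₂) ≤ γ₁) (h₂ : γ₂ / 2 ≤ γ₁) :
    KLAt f xb γ₁ ((μ₂ ^ (1 / γ₂) + ρ / 2 * μ₂ ^ (2 / γ₂)) ^ γ₁) := by
  set C := μ₂ ^ (1 / γ₂) + ρ / 2 * μ₂ ^ (2 / γ₂)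
  have hγ₁ : 0 < γ₁ := (half_pos hγ₂).trans_le h₂
  obtain ⟨ε, hε, hprox⟩ := hpr.exists_sub_le_norm_mul_dist
  obtain ⟨η, hη, ν, hν, hLS⟩ := h.exists_infDist_rpow_le hγ₂.le hμ₂.le
  set r := min ε 1
  have hr : 0 < r := lt_min hε one_pos
  refine KLAt_of_forall_sub_le hγ₁ (by positivity)
    ⟨min (ε / 2) η, by positivity, min (min ε ν) (C * r ^ (1 / γ₁)), by positivity, ?_⟩
  intro x hx p q hp hq hqp hpq v hv
  have hxε : dist x xb < ε / 2 := (Metric.mem_ball.1 hx).trans_le (min_le_left _ _)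
  have hsmall : p - q < min ε ν ∧ p - q < C * r ^ (1 / γ₁) := by
    rw [← lt_min_iff]; linarith
  rcases le_or_gt r ‖v‖ with hvr | hvr
  · calc p - q ≤ C * r ^ (1 / γ₁) := hsmall.2.le
      _ ≤ C * ‖v‖ ^ (1 / γ₁) := by gcongr
  have hS : IsClosed (slev f (f xb)) := hlsc.isClosed_preimage (f xb)
  obtain ⟨y, hyS, hyd⟩ := hS.exists_infDist_eq_dist ⟨xb, le_refl (f xb)⟩ x
  have hxy : dist x y ≤ dist x xb := hyd ▸ Metric.infDist_le_dist_of_mem (le_refl (f xb))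
  have hgap := hprox x v y p q hp hq (by linarith [min_le_left ε ν, hsmall.1]) hv
    (hvr.trans_le (min_le_left _ _)) (by linarith)
    (by linarith [dist_triangle y x xb, dist_comm x y]) hyS
  have heb := hLS x (Metric.mem_ball.2 ((Metric.mem_ball.1 hx).trans_le (min_le_right _ _)))
    (by rw [hp, hq]; exact_mod_cast hqp)
    (by rw [hp, hq]; exact_mod_cast (by linarith [min_le_right ε ν, hsmall.1] : p < q + ν))
    v hv
  rw [hyd] at heb
  calc p - q ≤ μ₂ ^ (1 / γ₂) * ‖v‖ ^ (1 + 1 / γ₂) + ρ / 2 * μ₂ ^ (2 / γ₂) * ‖v‖ ^ (2 / γ₂) :=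
        le_rpow_add_rpow_of_le_mul_add_sq hρ hγ₂ hμ₂.le (norm_nonneg v) dist_nonneg hgap heb
    _ ≤ C * ‖v‖ ^ (1 / γ₁) :=
        mul_rpow_add_mul_rpow_le (norm_nonneg v) (hvr.le.trans (min_le_right _ _)) hγ₂ h₁ h₂
          (by positivity) (by positivity)

theorem stmt9_general {n : ℕ} (f : EuclideanSpace ℝ (Fin n) → EReal)
    (hlsc : LowerSemicontinuous f)
    (xb : EuclideanSpace ℝ (Fin n))
    (ρ : ℝ) (hρ : 0 ≤ ρ) (hpr : ProxRegularAt f xb 0 ρ)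
    (γ₂ μ₂ : ℝ) (hγ : 0 < γ₂) (hμ : 0 < μ₂)
    (h : LSEBAt f xb γ₂ μ₂) :
    KLAt f xb (max (γ₂ / (1 + γ₂)) (γ₂ / 2))
      ((μ₂ ^ (1 / γ₂) + ρ / 2 * μ₂ ^ (2 / γ₂)) ^ (max (γ₂ / (1 + γ₂)) (γ₂ / 2))) :=
  KLAt_of_LSEBAt_of_proxRegularAt hlsc hρ hpr hγ hμ h (le_max_left _ _) (le_max_right _ _)

theorem stmt9 {n : ℕ} (f : EuclideanSpace ℝ (Fin n) → EReal)
    (hproper : IsProperFn f) (hlsc : LowerSemicontinuous f)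
    (xb : EuclideanSpace ℝ (Fin n)) (h0 : (0 : EuclideanSpace ℝ (Fin n)) ∈ lsubd f xb)
    (ρ : ℝ) (hρ : 0 ≤ ρ) (hpr : ProxRegularAt f xb 0 ρ)
    (γ₂ μ₂ : ℝ) (hγ : 0 < γ₂) (hμ : 0 < μ₂)
    (h : LSEBAt f xb γ₂ μ₂) :
    KLAt f xb (max (γ₂ / (1 + γ₂)) (γ₂ / 2))
      ((μ₂ ^ (1 / γ₂) + ρ / 2 * μ₂ ^ (2 / γ₂)) ^ (max (γ₂ / (1 + γ₂)) (γ₂ / 2))) :=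
  stmt9_general f hlsc xb ρ hρ hpr γ₂ μ₂ hγ hμ h

end
end
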